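/- Correctness of early evaluation: for every tail Q, if Q, s ⇓_{ρ, F} v, s' under the naive semantics for lambda-lifted programs, and x ∈ dom(ρ) with ρ x ∈ dom(s), then the term Q[x \ s(ρ x)] obtained by substituting the current value of x for the variable x throughout Q also satisfies Q[x \ s(ρ x)], s ⇓_{ρ, F} v, s'. -/

import Mathlib

namespace CPC

abbrev Loc := Nat
abbrev Var := String

inductive Val : Type
  | unit | tt | ff
  | nat (n : Nat)
deriving DecidableEq

inductive Tm : Type
  | val (v : Val)
  | var (x : Var)
  | assign (x : Var) (t : Tm)
  | ite (c t e : Tm)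
  | seq (a b : Tm)
  | letrec (f : Var) (ps : List Var) (body rest : Tm)
  | call (f : Var) (args : List Tm)

abbrev Env := Var → Option Loc
abbrev Store := Loc → Option Val

def emptyEnv : Env := fun _ => none
def emptyStore : Store := fun _ => none

/-- Modification (extension) of a partial function. -/
def updFn {α β : Type} [DecidableEq α] (f : α → Option β) (x : α) (y : β) :
    α → Option β :=
  fun t => if t = x then some y else f t

/-- Concatenation of environments: leftmost binding wins. -/
def envCat (ρ₁ ρ₂ : Env) : Env := fun x => (ρ₁ x).orElse (fun _ => ρ₂ x)

def single (x : Var) (l : Loc) : Env := updFn emptyEnv x l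

def envIm (ρ : Env) : Set Loc := {l | ∃ x, ρ x = some l}
def envDom (ρ : Env) : Set Var := {x | ρ x ≠ none}
def storeDom (s : Store) : Set Loc := {l | s l ≠ none}

open Classical in
/-- Cleaning of a store with respect to an environment. -/
noncomputable def clean (ρ : Env) (s : Store) : Store :=
  fun l => if l ∈ envIm ρ then none else s l

open Classical in
/-- Restriction of a store to a set of locations. -/
noncomputable def resStore (s : Store) (D : Set Loc) : Store :=
  fun l => if l ∈ D then s l else none

/-- Store extension: `t` agrees with `s` on `dom s`. -/
def StoreLe (s t : Store) : Prop := ∀ l ∈ storeDom s, t l = s l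

/-- Environment binding a list of variables to a list of locations. -/
def envOf (xs : List Var) (ls : List Loc) : Env := fun y => (xs.zip ls).lookup y

/-- Store updated with a list of locations bound to a list of values. -/
def updStore (s : Store) (ls : List Loc) (vs : List Val) : Store :=
  fun l => ((ls.zip vs).lookup l).orElse (fun _ => s l)

/-- Closures: parameters, body, captured variable environment,
    captured function environment. -/
inductive Clos : Type
  | mk (ps : List Var) (body : Tm) (ρ : Env) (F : List (Var × Clos))

abbrev FEnv := List (Var × Clos)

def lookupF (F : FEnv) (f : Var) : Option Clos := F.lookup f

/-- `LocIn l F`: the location `l` appears in `F`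
    (in some environment captured, recursively, in a closure of `F`). -/
inductive LocIn : Loc → FEnv → Prop
  | env {l : Loc} {F : FEnv} {f ps body ρ F'} :
      (f, Clos.mk ps body ρ F') ∈ F → l ∈ envIm ρ → LocIn l F
  | deep {l : Loc} {F : FEnv} {f ps body ρ F'} :
      (f, Clos.mk ps body ρ F') ∈ F → LocIn l F' → LocIn l F

/-! ### Naive big-step reduction rules (with derivation height) -/

mutual
inductive EvalN : Nat → Env → FEnv → Tm → Store → Val → Store → Prop
  | val {ρ : Env} {F : FEnv} {v s} : EvalN 1 ρ F (.val v) s v s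
  | var {ρ : Env} {F : FEnv} {x l s w} :
      ρ x = some l → s l = some w → EvalN 1 ρ F (.var x) s w s
  | assign {n} {ρ : Env} {F : FEnv} {a s v s' x l} :
      EvalN n ρ F a s v s' → ρ x = some l → l ∈ storeDom s' →
      EvalN (n+1) ρ F (.assign x a) s .unit (updFn s' l v)
  | seq {n m} {ρ : Env} {F : FEnv} {a b s v s' v' s''} :
      EvalN n ρ F a s v s' → EvalN m ρ F b s' v' s'' →
      EvalN (n+m+1) ρ F (.seq a b) s v' s''
  | ifT {n m} {ρ : Env} {F : FEnv} {c b e s s' v s''} :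
      EvalN n ρ F c s .tt s' → EvalN m ρ F b s' v s'' →
      EvalN (n+m+1) ρ F (.ite c b e) s v s''
  | ifF {n m} {ρ : Env} {F : FEnv} {c b e s s' v s''} :
      EvalN n ρ F c s .ff s' → EvalN m ρ F e s' v s'' →
      EvalN (n+m+1) ρ F (.ite c b e) s v s''
  | letrec {n} {ρ : Env} {F : FEnv} {f ps a b s v s'} :
      EvalN n ρ ((f, Clos.mk ps a ρ F) :: F) b s v s' →
      EvalN (n+1) ρ F (.letrec f ps a b) s v s'
  | call {n m} {ρ : Env} {F : FEnv} {f args s₁ vs s₂ xs b} {ρ' : Env} {F' : FEnv}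
      {ls : List Loc} {v s'} :
      lookupF F f = some (Clos.mk xs b ρ' F') →
      EvalNArgs n ρ F args s₁ vs s₂ →
      ls.length = xs.length → vs.length = xs.length → ls.Nodup →
      (∀ l ∈ ls, l ∉ storeDom s₂ ∧ ¬ LocIn l ((f, Clos.mk xs b ρ' F') :: F')) →
      EvalN m (envCat (envOf xs ls) ρ') ((f, Clos.mk xs b ρ' F') :: F')
        b (updStore s₂ ls vs) v s' →
      EvalN (n+m+1) ρ F (.call f args) s₁ v s'

inductive EvalNArgs : Nat → Env → FEnv → List Tm → Store → List Val → Store → Prop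
  | nil {ρ : Env} {F : FEnv} {s} : EvalNArgs 0 ρ F [] s [] s
  | cons {n m} {ρ : Env} {F : FEnv} {a as s v s' vs s''} :
      EvalN n ρ F a s v s' → EvalNArgs m ρ F as s' vs s'' →
      EvalNArgs (n+m) ρ F (a :: as) s (v :: vs) s''
end

/-! ### Intermediate big-step reduction rules (split environments,
      minimal stores, non-compact closures) -/

mutual
inductive EvalI : Nat → Env → Env → FEnv → Tm → Store → Val → Store → Prop
  | val {ρT ρ : Env} {F : FEnv} {v s} :
      EvalI 1 ρT ρ F (.val v) s v (clean ρT s)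
  | var {ρT ρ : Env} {F : FEnv} {x l s w} :
      envCat ρT ρ x = some l → s l = some w →
      EvalI 1 ρT ρ F (.var x) s w (clean ρT s)
  | assign {n} {ρT ρ : Env} {F : FEnv} {a s v s' x l} :
      EvalI n emptyEnv (envCat ρT ρ) F a s v s' →
      envCat ρT ρ x = some l → l ∈ storeDom s' →
      EvalI (n+1) ρT ρ F (.assign x a) s .unit (clean ρT (updFn s' l v))
  | seq {n m} {ρT ρ : Env} {F : FEnv} {a b s v s' v' s''} :
      EvalI n emptyEnv (envCat ρT ρ) F a s v s' → EvalI m ρT ρ F b s' v' s'' →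
      EvalI (n+m+1) ρT ρ F (.seq a b) s v' s''
  | ifT {n m} {ρT ρ : Env} {F : FEnv} {c b e s s' v s''} :
      EvalI n emptyEnv (envCat ρT ρ) F c s .tt s' → EvalI m ρT ρ F b s' v s'' →
      EvalI (n+m+1) ρT ρ F (.ite c b e) s v s''
  | ifF {n m} {ρT ρ : Env} {F : FEnv} {c b e s s' v s''} :
      EvalI n emptyEnv (envCat ρT ρ) F c s .ff s' → EvalI m ρT ρ F e s' v s'' →
      EvalI (n+m+1) ρT ρ F (.ite c b e) s v s''
  | letrec {n} {ρT ρ : Env} {F : FEnv} {f ps a b s v s'} :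
      EvalI n ρT ρ ((f, Clos.mk ps a (envCat ρT ρ) F) :: F) b s v s' →
      EvalI (n+1) ρT ρ F (.letrec f ps a b) s v s'
  | call {n m} {ρT ρ : Env} {F : FEnv} {f args s₁ vs s₂ xs b} {ρ' : Env} {F' : FEnv}
      {ls : List Loc} {v s'} :
      lookupF F f = some (Clos.mk xs b ρ' F') →
      EvalIArgs n (envCat ρT ρ) F args s₁ vs s₂ →
      ls.length = xs.length → vs.length = xs.length → ls.Nodup →
      (∀ l ∈ ls, l ∉ storeDom s₂ ∧ ¬ LocIn l ((f, Clos.mk xs b ρ' F') :: F')) →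
      EvalI m (envOf xs ls) ρ' ((f, Clos.mk xs b ρ' F') :: F')
        b (updStore s₂ ls vs) v s' →
      EvalI (n+m+1) ρT ρ F (.call f args) s₁ v (clean ρT s')

inductive EvalIArgs : Nat → Env → FEnv → List Tm → Store → List Val → Store → Prop
  | nil {ρ : Env} {F : FEnv} {s} : EvalIArgs 0 ρ F [] s [] s
  | cons {n m} {ρ : Env} {F : FEnv} {a as s v s' vs s''} :
      EvalI n emptyEnv ρ F a s v s' → EvalIArgs m ρ F as s' vs s'' →
      EvalIArgs (n+m) ρ F (a :: as) s (v :: vs) s''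
end

/-- Restriction of an environment outside a list of variables. -/
def restrictEnv (ρ : Env) (ps : List Var) : Env :=
  fun x => if x ∈ ps then none else ρ x

/-! ### Optimised big-step reduction rules (minimal stores and compact
      closures): identical to the intermediate rules except that the
      (letrec) rule builds compact closures -/

mutual
inductive EvalO : Nat → Env → Env → FEnv → Tm → Store → Val → Store → Prop
  | val {ρT ρ : Env} {F : FEnv} {v s} :
      EvalO 1 ρT ρ F (.val v) s v (clean ρT s)
  | var {ρT ρ : Env} {F : FEnv} {x l s w} :
      envCat ρT ρ x = some l → s l = some w →
      EvalO 1 ρT ρ F (.var x) s w (clean ρT s)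
  | assign {n} {ρT ρ : Env} {F : FEnv} {a s v s' x l} :
      EvalO n emptyEnv (envCat ρT ρ) F a s v s' →
      envCat ρT ρ x = some l → l ∈ storeDom s' →
      EvalO (n+1) ρT ρ F (.assign x a) s .unit (clean ρT (updFn s' l v))
  | seq {n m} {ρT ρ : Env} {F : FEnv} {a b s v s' v' s''} :
      EvalO n emptyEnv (envCat ρT ρ) F a s v s' → EvalO m ρT ρ F b s' v' s'' →
      EvalO (n+m+1) ρT ρ F (.seq a b) s v' s''
  | ifT {n m} {ρT ρ : Env} {F : FEnv} {c b e s s' v s''} :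
      EvalO n emptyEnv (envCat ρT ρ) F c s .tt s' → EvalO m ρT ρ F b s' v s'' →
      EvalO (n+m+1) ρT ρ F (.ite c b e) s v s''
  | ifF {n m} {ρT ρ : Env} {F : FEnv} {c b e s s' v s''} :
      EvalO n emptyEnv (envCat ρT ρ) F c s .ff s' → EvalO m ρT ρ F e s' v s'' →
      EvalO (n+m+1) ρT ρ F (.ite c b e) s v s''
  | letrec {n} {ρT ρ : Env} {F : FEnv} {f ps a b s v s'} :
      EvalO n ρT ρ ((f, Clos.mk ps a (restrictEnv (envCat ρT ρ) ps) F) :: F) b s v s' →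
      EvalO (n+1) ρT ρ F (.letrec f ps a b) s v s'
  | call {n m} {ρT ρ : Env} {F : FEnv} {f args s₁ vs s₂ xs b} {ρ' : Env} {F' : FEnv}
      {ls : List Loc} {v s'} :
      lookupF F f = some (Clos.mk xs b ρ' F') →
      EvalOArgs n (envCat ρT ρ) F args s₁ vs s₂ →
      ls.length = xs.length → vs.length = xs.length → ls.Nodup →
      (∀ l ∈ ls, l ∉ storeDom s₂ ∧ ¬ LocIn l ((f, Clos.mk xs b ρ' F') :: F')) →
      EvalO m (envOf xs ls) ρ' ((f, Clos.mk xs b ρ' F') :: F')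
        b (updStore s₂ ls vs) v s' →
      EvalO (n+m+1) ρT ρ F (.call f args) s₁ v (clean ρT s')

inductive EvalOArgs : Nat → Env → FEnv → List Tm → Store → List Val → Store → Prop
  | nil {ρ : Env} {F : FEnv} {s} : EvalOArgs 0 ρ F [] s [] s
  | cons {n m} {ρ : Env} {F : FEnv} {a as s v s' vs s''} :
      EvalO n emptyEnv ρ F a s v s' → EvalOArgs m ρ F as s' vs s'' →
      EvalOArgs (n+m) ρ F (a :: as) s (v :: vs) s''
end


/-- Lambda-lifted terms contain no `letrec` construct. -/
inductive NoLetrec : Tm → Prop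
  | val {v} : NoLetrec (.val v)
  | var {x} : NoLetrec (.var x)
  | assign {x t} : NoLetrec t → NoLetrec (.assign x t)
  | ite {c t e} : NoLetrec c → NoLetrec t → NoLetrec e → NoLetrec (.ite c t e)
  | seq {a b} : NoLetrec a → NoLetrec b → NoLetrec (.seq a b)
  | call {f args} : (∀ a ∈ args, NoLetrec a) → NoLetrec (.call f args)

mutual
/-- A closure of a lambda-lifted program: it captures the empty variable
environment and its body is letrec-free. -/
inductive ClosLifted : Clos → Prop
  | mk {ps b F} : NoLetrec b → FLifted F → ClosLifted (.mk ps b emptyEnv F)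

/-- A function environment of a lambda-lifted program. -/
inductive FLifted : FEnv → Prop
  | nil : FLifted []
  | cons {f c F} : ClosLifted c → FLifted F → FLifted ((f, c) :: F)
end
/-- Expressions: values or variables. -/
inductive IsExpr : Tm → Prop
  | val {v} : IsExpr (.val v)
  | var {x} : IsExpr (.var x)

/-- Nested function calls `F̂ ::= f(e,…,e) | f(e,…,e,F̂)`. -/
inductive NCall : Tm → Prop
  | base {f args} : (∀ a ∈ args, IsExpr a) → NCall (.call f args)
  | nest {f args F} : (∀ a ∈ args, IsExpr a) → NCall F →
      NCall (.call f (args ++ [F]))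

/-- Tails `Q ::= ε | Q ; F̂`. -/
inductive IsTail : Tm → Prop
  | eps : IsTail (.val .unit)
  | seq {Q F} : IsTail Q → NCall F → IsTail (.seq Q F)

/-- Substitution of the value `w` for the variable `x` throughout a term. -/
inductive Subst (x : Var) (w : Val) : Tm → Tm → Prop
  | varHit : Subst x w (.var x) (.val w)
  | varMiss {y} : y ≠ x → Subst x w (.var y) (.var y)
  | val {v} : Subst x w (.val v) (.val v)
  | assign {y t t'} : Subst x w t t' → Subst x w (.assign y t) (.assign y t')
  | ite {c c' t t' e e'} : Subst x w c c' → Subst x w t t' → Subst x w e e' →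
      Subst x w (.ite c t e) (.ite c' t' e')
  | seq {a a' b b'} : Subst x w a a' → Subst x w b b' →
      Subst x w (.seq a b) (.seq a' b')
  | letrec {f ps b b' r r'} : Subst x w b b' → Subst x w r r' →
      Subst x w (.letrec f ps b r) (.letrec f ps b' r')
  | call {f args args'} : args.length = args'.length →
      (∀ p ∈ args.zip args', Subst x w p.1 p.2) →
      Subst x w (.call f args) (.call f args')

/-! Outside function bodies a tail performs no assignment, and the functions of a lambda-lifted
program capture no variables, so a called body can only write to the fresh locations of its own
parameters. Hence evaluating a tail only extends the store (`s ⊑ s'`), so `x` still holds `w`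
whenever one of its occurrences is evaluated, and each such step `x ⇓ w` can be replaced by
`w ⇓ w` without changing the rest of the derivation. -/

theorem mem_of_lookup_eq_some {α β : Type*} [BEq α] [LawfulBEq α] {l : List (α × β)} {a : α}
    {b : β} (h : l.lookup a = some b) : (a, b) ∈ l := by
  obtain ⟨l₁, l₂, rfl, -⟩ := List.lookup_eq_some_iff.mp h
  simp

theorem not_mem_envIm_emptyEnv (l : Loc) : l ∉ envIm emptyEnv := by
  simp [envIm, emptyEnv]

theorem mem_envIm_envCat {ρ₁ ρ₂ : Env} {l : Loc} (h : l ∈ envIm (envCat ρ₁ ρ₂)) :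
    l ∈ envIm ρ₁ ∨ l ∈ envIm ρ₂ := by
  obtain ⟨y, hy⟩ := h
  cases h₁ : ρ₁ y with
  | some l₁ =>
    simp only [envCat, h₁, Option.orElse_some, Option.some.injEq] at hy
    exact Or.inl ⟨y, hy ▸ h₁⟩
  | none =>
    simp only [envCat, h₁, Option.orElse_none] at hy
    exact Or.inr ⟨y, hy⟩

theorem mem_of_mem_envIm_envOf {xs : List Var} {ls : List Loc} {l : Loc}
    (h : l ∈ envIm (envOf xs ls)) : l ∈ ls := by
  obtain ⟨y, hy⟩ := h
  exact (List.of_mem_zip (mem_of_lookup_eq_some hy)).2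

theorem updStore_of_not_mem {s : Store} {ls : List Loc} {vs : List Val} {l : Loc} (h : l ∉ ls) :
    updStore s ls vs l = s l := by
  cases hl : (ls.zip vs).lookup l with
  | none => simp [updStore, hl]
  | some v => exact absurd (List.of_mem_zip (mem_of_lookup_eq_some hl)).1 h

theorem LocIn.of_cons_mk {l : Loc} {f : Var} {xs : List Var} {b : Tm} {ρ : Env} {F : FEnv}
    (h : LocIn l ((f, Clos.mk xs b ρ F) :: F)) : l ∈ envIm ρ ∨ LocIn l F := by
  cases h with
  | env hmem hl =>
    rcases List.mem_cons.mp hmem with heq | hmem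
    · cases heq; exact Or.inl hl
    · exact Or.inr (.env hmem hl)
  | deep hmem hl =>
    rcases List.mem_cons.mp hmem with heq | hmem
    · cases heq; exact Or.inr hl
    · exact Or.inr (.deep hmem hl)

theorem FLifted.closLifted_of_mem {F : FEnv} (hF : FLifted F) {f : Var} {c : Clos}
    (h : (f, c) ∈ F) : ClosLifted c := by
  induction F with
  | nil => simp at h
  | cons p F ih =>
    cases hF with
    | cons hc hF =>
      simp only [List.mem_cons, Prod.mk.injEq] at h
      rcases h with ⟨-, rfl⟩ | h
      · exact hc
      · exact ih hF h

theorem FLifted.not_locIn {F : FEnv} (hF : FLifted F) {l : Loc} : ¬ LocIn l F := by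
  intro h
  induction h with
  | env hmem hl =>
    cases hF.closLifted_of_mem hmem
    exact not_mem_envIm_emptyEnv _ hl
  | deep hmem _ ih =>
    cases hF.closLifted_of_mem hmem with
    | mk _ hF' => exact ih hF'

theorem EvalN.frame {n : Nat} {ρ : Env} {F : FEnv} {t : Tm} {s s' : Store} {v : Val}
    (h : EvalN n ρ F t s v s') {l : Loc} {w : Val} (hs : s l = some w) (hρ : l ∉ envIm ρ)
    (hF : ¬ LocIn l F) : s' l = some w := by
  induction h using EvalN.rec (motive_2 := fun _ ρ F _ s _ s' _ =>
      s l = some w → l ∉ envIm ρ → ¬ LocIn l F → s' l = some w) with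
  | val | var => exact hs
  | nil hs _ _ => exact hs
  | assign _ hx _ ih =>
    rw [updFn, if_neg]
    · exact ih hs hρ hF
    · rintro rfl
      exact hρ ⟨_, hx⟩
  | seq _ _ ih₁ ih₂ | ifT _ _ ih₁ ih₂ | ifF _ _ ih₁ ih₂ | cons _ _ ih₁ ih₂ hs hρ hF =>
    exact ih₂ (ih₁ hs hρ hF) hρ hF
  | letrec _ ih =>
    exact ih hs hρ fun hl => (LocIn.of_cons_mk hl).elim hρ hF
  | call hlook _ _ _ _ hfresh _ ihargs ihbody =>
    have hmem := mem_of_lookup_eq_some hlook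
    have hs₂ := ihargs hs hρ hF
    have hls : l ∉ _ := fun hl => (hfresh l hl).1 (by simp [storeDom, hs₂])
    refine ihbody (by rwa [updStore_of_not_mem hls]) ?_ ?_
    · intro hl
      rcases mem_envIm_envCat hl with hl | hl
      · exact hls (mem_of_mem_envIm_envOf hl)
      · exact hF (.env hmem hl)
    · intro hl
      rcases LocIn.of_cons_mk hl with hl | hl
      · exact hF (.env hmem hl)
      · exact hF (.deep hmem hl)

theorem storeLe_iff {s t : Store} : StoreLe s t ↔ ∀ l w, s l = some w → t l = some w := by
  refine ⟨fun h l w hl => (h l (by simp [storeDom, hl])).trans hl, fun h l hl => ?_⟩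
  obtain ⟨w, hw⟩ := Option.ne_none_iff_exists'.mp hl
  rw [hw, h l w hw]

theorem StoreLe.refl (s : Store) : StoreLe s s := fun _ _ => rfl

theorem StoreLe.trans {s₁ s₂ s₃ : Store} (h₁₂ : StoreLe s₁ s₂) (h₂₃ : StoreLe s₂ s₃) :
    StoreLe s₁ s₃ :=
  storeLe_iff.mpr fun l w hl => storeLe_iff.mp h₂₃ l w (storeLe_iff.mp h₁₂ l w hl)

def StorePreserving (ρ : Env) (F : FEnv) (t : Tm) : Prop :=
  ∀ ⦃n s v s'⦄, EvalN n ρ F t s v s' → StoreLe s s'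

section StorePreserving

variable {ρ : Env} {F : FEnv}

theorem IsExpr.store_eq {n : Nat} {t : Tm} {s s' : Store} {v : Val} (ht : IsExpr t)
    (h : EvalN n ρ F t s v s') : s' = s := by
  cases ht <;> cases h <;> rfl

theorem IsExpr.storePreserving {t : Tm} (ht : IsExpr t) : StorePreserving ρ F t :=
  fun _ _ _ _ h => ht.store_eq h ▸ StoreLe.refl _

theorem StorePreserving.seq {a b : Tm} (ha : StorePreserving ρ F a)
    (hb : StorePreserving ρ F b) : StorePreserving ρ F (.seq a b) := by
  intro _ _ _ _ h
  cases h with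
  | seq h₁ h₂ => exact (ha h₁).trans (hb h₂)

theorem EvalNArgs.storeLe {n : Nat} {as : List Tm} {s s' : Store} {vs : List Val}
    (hs : ∀ a ∈ as, StorePreserving ρ F a) (h : EvalNArgs n ρ F as s vs s') :
    StoreLe s s' := by
  induction as generalizing n s vs with
  | nil => cases h; exact StoreLe.refl _
  | cons a as ih =>
    cases h with
    | cons h₁ h₂ =>
      exact (hs a List.mem_cons_self h₁).trans (ih (fun b hb => hs b (.tail a hb)) h₂)

theorem StorePreserving.call {f : Var} {args : List Tm} (hF : FLifted F)
    (hargs : ∀ a ∈ args, StorePreserving ρ F a) : StorePreserving ρ F (.call f args) := by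
  intro _ _ _ _ h
  cases h with
  | call hlook hargsN _ _ _ hfresh hbody =>
    have hmem := mem_of_lookup_eq_some hlook
    obtain ⟨hb, hF'⟩ := hF.closLifted_of_mem hmem
    -- The callee captures no variables, so its body can write only to the fresh parameter
    -- locations, none of which is in the domain of the store it starts from.
    refine (hargsN.storeLe hargs).trans (storeLe_iff.mpr fun l w hs₂ => ?_)
    have hls : l ∉ _ := fun hl => (hfresh l hl).1 (by simp [storeDom, hs₂])
    refine hbody.frame (by rwa [updStore_of_not_mem hls]) (fun hl => ?_)
      (FLifted.cons (.mk hb hF') hF').not_locIn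
    rcases mem_envIm_envCat hl with hl | hl
    · exact hls (mem_of_mem_envIm_envOf hl)
    · exact not_mem_envIm_emptyEnv l hl

theorem NCall.storePreserving {t : Tm} (hF : FLifted F) (ht : NCall t) :
    StorePreserving ρ F t := by
  induction ht with
  | base hargs => exact .call hF fun a ha => (hargs a ha).storePreserving
  | nest hargs _ ih =>
    refine .call hF fun a ha => ?_
    rcases List.mem_append.mp ha with ha | ha
    · exact (hargs a ha).storePreserving
    · exact List.mem_singleton.mp ha ▸ ih

theorem IsTail.storePreserving {Q : Tm} (hF : FLifted F) (hQ : IsTail Q) :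
    StorePreserving ρ F Q := by
  induction hQ with
  | eps => exact IsExpr.val.storePreserving
  | seq _ hN ih => exact ih.seq (hN.storePreserving hF)

end StorePreserving

def EarlyEvalSound (ρ : Env) (F : FEnv) (x : Var) (w : Val) (t : Tm) : Prop :=
  ∀ ⦃n l s v s'⦄, ρ x = some l → s l = some w → EvalN n ρ F t s v s' →
    ∀ t', Subst x w t t' → ∃ m, EvalN m ρ F t' s v s'

section EarlyEvalSound

variable {ρ : Env} {F : FEnv} {x : Var} {w : Val}

theorem IsExpr.earlyEvalSound {t : Tm} (ht : IsExpr t) : EarlyEvalSound ρ F x w t := by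
  intro _ _ _ _ _ hx hl h t' hsub
  cases ht with
  | val => cases hsub; exact ⟨_, h⟩
  | var =>
    cases hsub with
    | varHit =>
      cases h with
      | var hx' hl' =>
        cases hx.symm.trans hx'
        cases hl.symm.trans hl'
        exact ⟨1, .val⟩
    | varMiss _ => exact ⟨_, h⟩

theorem EarlyEvalSound.seq {a b : Tm} (ha' : StorePreserving ρ F a)
    (ha : EarlyEvalSound ρ F x w a) (hb : EarlyEvalSound ρ F x w b) :
    EarlyEvalSound ρ F x w (.seq a b) := by
  intro _ l _ _ _ hx hl h t' hsub
  cases hsub with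
  | seq hsub₁ hsub₂ =>
    cases h with
    | seq h₁ h₂ =>
      obtain ⟨_, h₁'⟩ := ha hx hl h₁ _ hsub₁
      obtain ⟨_, h₂'⟩ := hb hx (storeLe_iff.mp (ha' h₁) l w hl) h₂ _ hsub₂
      exact ⟨_, .seq h₁' h₂'⟩

theorem EvalNArgs.exists_of_forall₂_subst {n : Nat} {l : Loc} {as as' : List Tm} {s s' : Store}
    {vs : List Val} (hargs : ∀ a ∈ as, StorePreserving ρ F a ∧ EarlyEvalSound ρ F x w a)
    (hx : ρ x = some l) (hl : s l = some w) (h : EvalNArgs n ρ F as s vs s')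
    (hsub : List.Forall₂ (Subst x w) as as') : ∃ m, EvalNArgs m ρ F as' s vs s' := by
  induction hsub generalizing n s vs with
  | nil => cases h; exact ⟨0, .nil⟩
  | @cons a a' as as' hsub _ ih =>
    cases h with
    | cons h₁ h₂ =>
      obtain ⟨ha', ha⟩ := hargs a List.mem_cons_self
      obtain ⟨_, h₁'⟩ := ha hx hl h₁ a' hsub
      obtain ⟨_, h₂'⟩ := ih (fun b hb => hargs b (.tail a hb))
        (storeLe_iff.mp (ha' h₁) l w hl) h₂
      exact ⟨_, .cons h₁' h₂'⟩

theorem EarlyEvalSound.call {f : Var} {args : List Tm}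
    (hargs : ∀ a ∈ args, StorePreserving ρ F a ∧ EarlyEvalSound ρ F x w a) :
    EarlyEvalSound ρ F x w (.call f args) := by
  intro _ _ _ _ _ hx hl h t' hsub
  cases hsub with
  | call hlen hzip =>
    cases h with
    | call hlook hargsN hlen₁ hlen₂ hnd hfresh hbody =>
      obtain ⟨_, hargsN'⟩ :=
        hargsN.exists_of_forall₂_subst hargs hx hl (List.forall₂_iff_zip.mpr ⟨hlen, hzip _⟩)
      exact ⟨_, .call hlook hargsN' hlen₁ hlen₂ hnd hfresh hbody⟩

theorem NCall.earlyEvalSound {t : Tm} (hF : FLifted F) (ht : NCall t) :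
    EarlyEvalSound ρ F x w t := by
  induction ht with
  | base hargs =>
    exact .call fun a ha => ⟨(hargs a ha).storePreserving, (hargs a ha).earlyEvalSound⟩
  | nest hargs hN ih =>
    refine .call fun a ha => ?_
    rcases List.mem_append.mp ha with ha | ha
    · exact ⟨(hargs a ha).storePreserving, (hargs a ha).earlyEvalSound⟩
    · exact List.mem_singleton.mp ha ▸ ⟨hN.storePreserving hF, ih⟩

theorem IsTail.earlyEvalSound {Q : Tm} (hF : FLifted F) (hQ : IsTail Q) :
    EarlyEvalSound ρ F x w Q := by
  induction hQ with
  | eps => exact IsExpr.val.earlyEvalSound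
  | seq hQ hN ih => exact ih.seq (hQ.storePreserving hF) (hN.earlyEvalSound hF)

end EarlyEvalSound

/-- correctness of early evaluation for tails. -/
theorem early_evaluation
    {n : Nat} {ρ : Env} {F : FEnv} {Q : Tm} {s s' : Store} {v : Val}
    {x : Var} {l : Loc} {w : Val}
    (hQ : IsTail Q) (hF : FLifted F)
    (hx : ρ x = some l) (hl : s l = some w)
    (h : EvalN n ρ F Q s v s') :
    ∀ Q', Subst x w Q Q' → ∃ m, EvalN m ρ F Q' s v s' :=
  hQ.earlyEvalSound hF hx hl h

end CPC
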